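/- arXiv:1104.5185 — 2 statements merged into one kernel-verified Lean document; each statement's English description precedes it below -/
import Mathlib

section
/- Let (X, d) be a metric space and f : X → X a continuous map. If z is a positively recurrent point of f, then z is a positively recurrent point of f^q for every positive integer q. -/
/-!
Write `ω_g(x)` for the set of cluster points of the orbit `g^[n] x`; in a metric space `z` is
positively recurrent for `g` iff `z ∈ ω_g(z)`. Splitting the times of return of `f` to `z` by their
residue mod `q` gives some `i < q` with `z ∈ ω_{f^q}(f^i z)`. The map `h = f^i` commutes with
`f^q`, so by continuity `z ∈ ω_{f^q}(h^k z)` implies `h z ∈ ω_{f^q}(h^{k+1} z)`, and since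
ω-limit sets are closed and forward invariant this gives `ω_{f^q}(h z) ⊆ ω_{f^q}(h^{k+1} z)`.
By induction `z ∈ ω_{f^q}(h^q z) = ω_{f^q}((f^q)^i z) = ω_{f^q}(z)`.
-/

open Filter Topology

/-- `z` is a positively recurrent point of `g`: some subsequence of the forward orbit
of `z` converges to `z`. -/
def PosRec {X : Type*} [TopologicalSpace X] (g : X → X) (z : X) : Prop :=
  ∃ φ : ℕ → ℕ, StrictMono φ ∧ Tendsto (fun k => g^[φ k] z) atTop (𝓝 z)

section

variable {X : Type*} [TopologicalSpace X]

theorem posRec_iff_mapClusterPt [FirstCountableTopology X] {g : X → X} {z : X} :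
    PosRec g z ↔ MapClusterPt z atTop (fun n => g^[n] z) :=
  ⟨fun ⟨_, hφ, hlim⟩ => .of_comp hφ.tendsto_atTop hlim.mapClusterPt,
    MapClusterPt.tendsto_subseq⟩

theorem MapClusterPt.exists_mul_add {x : X} {u : ℕ → X} (h : MapClusterPt x atTop u)
    {q : ℕ} (hq : 0 < q) : ∃ i < q, MapClusterPt x atTop (fun m => u (q * m + i)) := by
  by_contra! H
  have H' : ∀ i : Fin q, ∃ s ∈ 𝓝 x, ∀ᶠ m in atTop, u (q * m + i) ∉ s := fun i => by
    simpa [mapClusterPt_iff_frequently, not_frequently] using H i i.isLt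
  choose s hs hev using H'
  obtain ⟨N, hN⟩ := eventually_atTop.1 (eventually_all.2 hev)
  obtain ⟨n, hn, hun⟩ :=
    frequently_atTop.1 (mapClusterPt_iff_frequently.1 h _ (iInter_mem.2 hs)) (q * N)
  have hNn : N ≤ n / q := (Nat.le_div_iff_mul_le hq).2 (by linarith)
  have hmiss := hN (n / q) hNn ⟨n % q, Nat.mod_lt n hq⟩
  rw [Nat.div_add_mod] at hmiss
  exact hmiss (Set.mem_iInter.1 hun _)

theorem mapClusterPt_iterate_shift_iff {g : X → X} {x y : X} (k : ℕ) :
    MapClusterPt y atTop (fun n => g^[n] (g^[k] x)) ↔ MapClusterPt y atTop (fun n => g^[n] x) := by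
  have hshift : (fun n => g^[n] (g^[k] x)) = (fun n => g^[n] x) ∘ (· + k) := by
    funext n
    exact (Function.iterate_add_apply g n k x).symm
  rw [hshift, mapClusterPt_comp, map_add_atTop_eq_nat]

theorem MapClusterPt.apply_of_commute {g h : X → X} {x y : X} (hgh : Function.Commute h g)
    (hh : ContinuousAt h y) (hy : MapClusterPt y atTop (fun n => g^[n] x)) :
    MapClusterPt (h y) atTop (fun n => g^[n] (h x)) := by
  have hcomp : (fun n => g^[n] (h x)) = h ∘ fun n => g^[n] x := by
    funext n
    exact ((hgh.iterate_right n).eq x).symm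
  rw [hcomp]
  exact hy.continuousAt_comp hh

theorem MapClusterPt.iterate_trans {g : X → X} (hg : Continuous g) {x y w : X}
    (hy : MapClusterPt y atTop (fun n => g^[n] x)) (hw : MapClusterPt w atTop (fun n => g^[n] y)) :
    MapClusterPt w atTop (fun n => g^[n] x) :=
  isClosed_setOfPred_clusterPt.mem_of_mapClusterPt hw <| .of_forall fun n =>
    (mapClusterPt_iterate_shift_iff n).1 <|
      hy.apply_of_commute (Function.Commute.iterate_self g n) (hg.iterate n).continuousAt

theorem mapClusterPt_iterate_succ_of_commute {g h : X → X} (hg : Continuous g)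
    (hh : Continuous h) (hgh : Function.Commute h g) {z : X}
    (hz : MapClusterPt z atTop (fun n => g^[n] (h z))) (k : ℕ) :
    MapClusterPt z atTop (fun n => g^[n] (h^[k + 1] z)) := by
  induction k with
  | zero => simpa using hz
  | succ k ih =>
    have hhz := ih.apply_of_commute hgh hh.continuousAt
    rw [← Function.iterate_succ_apply' h] at hhz
    exact hhz.iterate_trans hg hz

end

/-- Lemma 6.1: in a metric space, a positively recurrent point of a continuous map `f`
is also a positively recurrent point of `f^q` for every positive integer `q`. -/
theorem posRec_iterate {X : Type*} [MetricSpace X] (f : X → X) (hf : Continuous f)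
    (z : X) (hz : PosRec f z) (q : ℕ) (hq : 0 < q) :
    PosRec (f^[q]) z := by
  rw [posRec_iff_mapClusterPt] at hz ⊢
  obtain ⟨i, -, hi⟩ := hz.exists_mul_add hq
  simp only [Function.iterate_add_apply, Function.iterate_mul] at hi
  have hrec := mapClusterPt_iterate_succ_of_commute (hf.iterate q) (hf.iterate i)
    ((Function.Commute.refl f).iterate_iterate i q) hi (q - 1)
  rwa [Nat.sub_add_cancel hq, ← Function.iterate_mul, mul_comm, Function.iterate_mul,
    mapClusterPt_iterate_shift_iff] at hrec
end

section
/- Let f be a homeomorphism of the open annulus 𝔸 isotopic to the identity and F a lift of f to ℝ². For an integer q ≥ 1, let f_q be the homeomorphism of the annulus 𝔸_q = ℝ²/T^q lifted by F, and let π_q : ℝ² → 𝔸_q be the covering map. If z ∈ Rec⁺(f) and z̃ ∈ π^{−1}(z), then π_q(z̃) ∈ Rec⁺(f_q^q). -/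
open Filter Topology Set

noncomputable section

/-- The plane ℝ². -/
abbrev Plane := ℝ × ℝ

/-- The open annulus 𝔸 = ℝ/ℤ × ℝ. -/
abbrev Ann := AddCircle (1 : ℝ) × ℝ

/-- The covering map π : ℝ² → 𝔸, (x,y) ↦ (x + ℤ, y). -/
def prj : Plane → Ann := fun p => ((p.1 : AddCircle (1 : ℝ)), p.2)

/-- The deck transformation T^k : ℝ² → ℝ², (x,y) ↦ (x + k, y). -/
def Tr (k : ℤ) : Plane → Plane := fun p => (p.1 + (k : ℝ), p.2)

/-- `F` is a lift of `f` to the universal cover ℝ² of the annulus. -/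
def IsLift (f : Ann ≃ₜ Ann) (F : Plane ≃ₜ Plane) : Prop :=
  ∀ p : Plane, prj (F p) = f (prj p)

/-- `f` is isotopic to the identity: there is a continuous family of homeomorphisms
joining the identity to `f`. -/
def IsotopicToId (f : Ann ≃ₜ Ann) : Prop :=
  ∃ H : ℝ → Ann → Ann,
    Continuous (fun q : ℝ × Ann => H q.1 q.2) ∧
    (∀ t : ℝ, ∃ h : Ann ≃ₜ Ann, ∀ z, H t z = h z) ∧
    (∀ z, H 0 z = z) ∧ (∀ z, H 1 z = f z)

/-- An essential circle in 𝔸: a simple closed curve which is not null-homotopic. -/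
def IsEssentialCircle (c : Set Ann) : Prop :=
  ∃ φ : C(AddCircle (1 : ℝ), Ann), Function.Injective φ ∧ Set.range φ = c ∧
    ¬ ∃ pt : Ann, φ.Homotopic (ContinuousMap.const _ pt)

/-- `f` has the intersection property: every essential circle meets its image. -/
def IntersectionProperty (f : Ann → Ann) : Prop :=
  ∀ c : Set Ann, IsEssentialCircle c → (c ∩ f '' c).Nonempty

/-- The positively recurrent point `z` has rotation number `ρ` for the lift `F` of `f`. -/
def HasRotNum (f : Ann → Ann) (F : Plane → Plane) (z : Ann) (ρ : ℝ) : Prop :=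
  PosRec f z ∧
    ∀ zt : Plane, prj zt = z →
      ∀ φ : ℕ → ℕ, StrictMono φ →
        Tendsto (fun k => f^[φ k] z) atTop (𝓝 z) →
        Tendsto (fun k => ((F^[φ k] zt).1 - zt.1) / (φ k : ℝ)) atTop (𝓝 ρ)

/-- The rotation set Rot(F): the set of rotation numbers of positively recurrent
points of `f`. -/
def Rot (f : Ann → Ann) (F : Plane → Plane) : Set ℝ := {ρ | ∃ z, HasRotNum f F z ρ}

/-- The region `L(Γ)` of the plane on the left (west) of a line `Γ` (as a subset of ℝ²):
points lying in the connected component of the complement of `Γ` containing all far-west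
points of the horizontal axis. -/
def Lset (Γ : Set Plane) : Set Plane :=
  {p | ∃ s : ℝ, ∀ x ≤ s, p ∈ connectedComponentIn Γᶜ ((x, 0) : Plane)}

/-- The region `R(Γ)` of the plane on the right (east) of a line `Γ`. -/
def Rset (Γ : Set Plane) : Set Plane :=
  {p | ∃ s : ℝ, ∀ x ≥ s, p ∈ connectedComponentIn Γᶜ ((x, 0) : Plane)}

/-- The relation `Γ₁ < Γ₂` on (essential, oriented from south to north) lines:
`Cl(L(Γ₁)) ⊆ L(Γ₂)`. -/
def lineLT (Γ₁ Γ₂ : Set Plane) : Prop := closure (Lset Γ₁) ⊆ Lset Γ₂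

/-- An essential line in ℝ², oriented from south to north: a properly embedded copy of ℝ
whose second coordinate tends to ±∞ at ±∞. -/
def IsEssLinePlane (Γ : ℝ → Plane) : Prop :=
  Continuous Γ ∧ Function.Injective Γ ∧ IsProperMap Γ ∧
    Tendsto (fun t => (Γ t).2) atTop atTop ∧ Tendsto (fun t => (Γ t).2) atBot atBot

/-- An essential line in the annulus 𝔸: a properly embedded simple path joining one end
to the other. -/
def IsEssLineAnn (γ : ℝ → Ann) : Prop :=
  Continuous γ ∧ Function.Injective γ ∧ IsProperMap γ ∧
    ((Tendsto (fun t => (γ t).2) atTop atTop ∧ Tendsto (fun t => (γ t).2) atBot atBot) ∨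
     (Tendsto (fun t => (γ t).2) atTop atBot ∧ Tendsto (fun t => (γ t).2) atBot atTop))

/-- An oriented essential line in 𝔸 joining the lower end S to the upper end N. -/
def IsEssLineAnnSN (γ : ℝ → Ann) : Prop :=
  Continuous γ ∧ Function.Injective γ ∧ IsProperMap γ ∧
    Tendsto (fun t => (γ t).2) atTop atTop ∧ Tendsto (fun t => (γ t).2) atBot atBot

/-- The covering map `π_q : ℝ² → 𝔸_q = ℝ²/T^q`. -/
def prjq (q : ℕ) : Plane → AddCircle (q : ℝ) × ℝ :=
  fun p => ((p.1 : AddCircle (q : ℝ)), p.2)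

/-! Conjugation by `F` maps the deck transformation `T` to `T^{±1}`, so `f_q` commutes with the
rotation `S` of order `q` of `𝔸_q` up to replacing `S` by `S^{±1}`. Recurrence of `z` means that
the `f_q`-orbit of `w = π_q(z̃)` accumulates on the fibre `{S^j w}`. Call `(j, r)` attained if
`S^j w` is a limit of `f_q^n w` along times `n ≡ r (mod 2q)`; some pair is attained, and since
ω-limits are transitive the attained pairs are closed under the composition law of the
semidirect product `ℤ/q ⋊ ℤ/2q`. Composing an attained pair with itself `4q` times gives
`(0, 0)`: `w` is a limit of `f_q^n w` along multiples of `2q`. -/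

section OrbitClusterPt

variable {X : Type*} [TopologicalSpace X] {g : X → X} {p q r r' : ℕ} {x y y' : X}

def OrbitClusterPt (g : X → X) (p r : ℕ) (x y : X) : Prop :=
  ∀ U ∈ 𝓝 y, ∃ᶠ n in atTop, n ≡ r [MOD p] ∧ g^[n] x ∈ U

theorem OrbitClusterPt.trans (hg : Continuous g) (hxy : OrbitClusterPt g p r x y)
    (hyy' : OrbitClusterPt g p r' y y') : OrbitClusterPt g p (r + r') x y' := by
  intro U hU
  rw [frequently_atTop]
  intro N
  obtain ⟨n', hn'r, hn'U⟩ := (hyy' _ (interior_mem_nhds.2 hU)).exists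
  have hV : g^[n'] ⁻¹' interior U ∈ 𝓝 y :=
    (hg.iterate n').continuousAt.preimage_mem_nhds (isOpen_interior.mem_nhds hn'U)
  obtain ⟨n, hnN, hnr, hnV⟩ := frequently_atTop.1 (hxy _ hV) N
  refine ⟨n' + n, le_add_left hnN, by rw [add_comm r]; exact hn'r.add hnr, ?_⟩
  rw [Function.iterate_add_apply]
  exact interior_subset hnV

theorem OrbitClusterPt.of_modEq (h : OrbitClusterPt g p r x y) (hr : r ≡ r' [MOD p]) :
    OrbitClusterPt g p r' x y :=
  fun U hU => (h U hU).mono fun _ ⟨hn, hnU⟩ => ⟨hn.trans hr, hnU⟩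

theorem OrbitClusterPt.posRec_iterate [FirstCountableTopology X] (hq : 0 < q) (hqp : q ∣ p)
    (h : OrbitClusterPt g p 0 x x) : PosRec (g^[q]) x := by
  refine MapClusterPt.tendsto_subseq (u := fun k => (g^[q])^[k] x)
    (mapClusterPt_iff_frequently.2 fun U hU => ?_)
  refine (Nat.tendsto_div_const_atTop hq.ne').frequently_map _ (fun n ⟨hn0, hnU⟩ => ?_) (h U hU)
  have hqn : q ∣ n := hqp.trans (Nat.modEq_zero_iff_dvd.1 hn0)
  rwa [← Function.iterate_mul, Nat.mul_div_cancel' hqn]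

end OrbitClusterPt

theorem exists_orbitClusterPt_of_tendsto_dist {X : Type*} [PseudoMetricSpace X] {g : X → X}
    {x : X} {p : ℕ} {ψ : ℕ → ℕ} (hψ : Tendsto ψ atTop atTop) {v : ℕ → X} (hv : (range v).Finite)
    (hp : 0 < p) (h : Tendsto (fun k => dist (g^[ψ k] x) (v k)) atTop (𝓝 0)) :
    ∃ k r, OrbitClusterPt g p r x (v k) := by
  have hcover : ∃ᶠ k in atTop, ∃ i ∈ range v ×ˢ Iio p, v k = i.1 ∧ ψ k % p = i.2 :=
    Frequently.of_forall fun k => ⟨(v k, ψ k % p), ⟨mem_range_self k, Nat.mod_lt _ hp⟩, rfl, rfl⟩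
  obtain ⟨⟨y, r⟩, ⟨⟨k, rfl⟩, -⟩, hfreq⟩ := (hv.prod (finite_Iio p)).frequently_exists.1 hcover
  simp only at hfreq
  refine ⟨k, r, fun U hU => ?_⟩
  obtain ⟨ε, hε, hball⟩ := Metric.mem_nhds_iff.1 hU
  have hclose := h.eventually (gt_mem_nhds hε)
  refine hψ.frequently_map _ (fun j ⟨⟨hvj, hψj⟩, hj⟩ => ⟨?_, hball ?_⟩) (hfreq.and_eventually hclose)
  · rw [← hψj]; exact (Nat.mod_modEq _ _).symm
  · rw [Metric.mem_ball, ← hvj]; exact hj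

section Translation

variable {X : Type*} [AddCommGroup X] {g : X → X} {τ : X} {m : ℤˣ}

theorem iterate_add_zsmul (hg : ∀ x (k : ℤ), g (x + k • τ) = g x + (k * m) • τ) (n : ℕ) (x : X)
    (k : ℤ) : g^[n] (x + k • τ) = g^[n] x + (k * ↑(m ^ n)) • τ := by
  induction n generalizing x k with
  | zero => simp
  | succ n ih => rw [Function.iterate_succ_apply, Function.iterate_succ_apply, hg, ih, pow_succ',
      Units.val_mul, mul_assoc]

variable [TopologicalSpace X] [ContinuousAdd X] {p r r' : ℕ} {w : X} {j j' : ℤ}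

theorem OrbitClusterPt.add_zsmul (hg : ∀ x (k : ℤ), g (x + k • τ) = g x + (k * m) • τ)
    (hp : 2 ∣ p) {x y : X} (h : OrbitClusterPt g p r x y) (k : ℤ) :
    OrbitClusterPt g p r (x + k • τ) (y + (k * ↑(m ^ r)) • τ) := by
  intro U hU
  have hV : (· + (k * ↑(m ^ r)) • τ) ⁻¹' U ∈ 𝓝 y :=
    (continuous_add_const _).continuousAt.preimage_mem_nhds hU
  refine (h _ hV).mono fun n ⟨hnr, hnU⟩ => ⟨hnr, ?_⟩
  have hmn : m ^ n = m ^ r := by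
    rw [Int.units_pow_eq_pow_mod_two, hnr.of_dvd hp, ← Int.units_pow_eq_pow_mod_two]
  rwa [iterate_add_zsmul hg, hmn]

theorem OrbitClusterPt.add_zsmul_trans (hg : ∀ x (k : ℤ), g (x + k • τ) = g x + (k * m) • τ)
    (hgc : Continuous g) (hp : 2 ∣ p) (h : OrbitClusterPt g p r w (w + j • τ))
    (h' : OrbitClusterPt g p r' w (w + j' • τ)) :
    OrbitClusterPt g p (r + r') w (w + (j * ↑(m ^ r') + j') • τ) := by
  refine h.trans hgc ?_
  convert h'.add_zsmul hg hp j using 1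
  rw [_root_.add_zsmul]
  abel

theorem OrbitClusterPt.self_of_add_zsmul (hg : ∀ x (k : ℤ), g (x + k • τ) = g x + (k * m) • τ)
    (hgc : Continuous g) (hp : 2 ∣ p) (hpτ : p • τ = 0) (hp0 : 0 < p)
    (h : OrbitClusterPt g p r w (w + j • τ)) : OrbitClusterPt g p 0 w w := by
  have h₂ := h.add_zsmul_trans hg hgc hp h
  have hm₂ : m ^ (r + r) = 1 := by rw [← two_mul, pow_mul, Int.units_sq, one_pow]
  have hmul : ∀ k : ℕ, OrbitClusterPt g p ((k + 1) * (r + r)) w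
      (w + ((k + 1 : ℕ) * (j * ↑(m ^ r) + j)) • τ) := by
    intro k
    induction k with
    | zero => simpa using h₂
    | succ k ih =>
      have := ih.add_zsmul_trans hg hgc hp h₂
      rw [hm₂] at this
      convert this using 3 <;> push_cast <;> ring
  have := hmul (p - 1)
  rw [Nat.sub_add_cancel hp0, mul_comm (p : ℤ), mul_zsmul, natCast_zsmul, hpτ, zsmul_zero,
    add_zero] at this
  exact this.of_modEq (Nat.modEq_zero_iff_dvd.2 (dvd_mul_right _ _))

end Translation

theorem finite_range_add_zsmul {X : Type*} [AddGroup X] {τ : X} (hτ : IsOfFinAddOrder τ) (w : X)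
    (a : ℕ → ℤ) : (range fun k => w + a k • τ).Finite :=
  ((finite_zmultiples.2 hτ).image (w + ·)).subset
    (range_subset_iff.2 fun k => ⟨_, AddSubgroup.zsmul_mem_zmultiples τ (a k), rfl⟩)

section Covering

theorem tr_tr (k l : ℤ) (p : Plane) : Tr k (Tr l p) = Tr (k + l) p := by
  simp only [Tr, Int.cast_add]
  ring_nf

theorem tr_left_injective (p : Plane) : Function.Injective fun k : ℤ => Tr k p := by
  intro k l hkl
  simpa [Tr] using congrArg Prod.fst hkl

theorem continuous_tr (k : ℤ) : Continuous (Tr k) := by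
  unfold Tr
  fun_prop

theorem prj_tr (k : ℤ) (p : Plane) : prj (Tr k p) = prj p := by
  simp [prj, Tr]

theorem prjq_tr (q : ℕ) (k : ℤ) (p : Plane) :
    prjq q (Tr k p) = prjq q p + k • prjq q (1, 0) := by
  simp [prjq, Tr, ← AddCircle.coe_zsmul]

theorem nsmul_prjq_one_zero (q : ℕ) : q • prjq q (1, 0) = 0 := by
  simp [prjq, ← AddCircle.coe_nsmul]

theorem prjq_surjective (q : ℕ) : Function.Surjective (prjq q) := by
  rintro ⟨x, y⟩
  obtain ⟨a, rfl⟩ := QuotientAddGroup.mk_surjective x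
  exact ⟨(a, y), rfl⟩

theorem dist_prjq_le (q : ℕ) (a b : Plane) : dist (prjq q a) (prjq q b) ≤ dist a b := by
  simp only [prjq, Prod.dist_eq]
  refine max_le_max ?_ le_rfl
  rw [dist_eq_norm, ← QuotientAddGroup.mk_sub, Real.dist_eq, ← Real.norm_eq_abs]
  exact QuotientAddGroup.norm_mk_le_norm

theorem dist_prj_eq (a b : Plane) : dist (prj a) (prj b) = dist a (Tr (round (a.1 - b.1)) b) := by
  simp only [prj, Tr, Prod.dist_eq]
  congr 1
  rw [dist_eq_norm, ← QuotientAddGroup.mk_sub, AddCircle.norm_eq, Real.dist_eq, inv_one, one_mul,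
    mul_one, sub_add_eq_sub_sub]

theorem exists_eq_tr_of_prj_comp_eq {D : Plane → Plane} (hD : Continuous D)
    (h : ∀ p, prj (D p) = prj p) : ∃ n : ℤ, ∀ p, D p = Tr n p := by
  have hmem : ∀ p, (D p).1 - p.1 ∈ AddSubgroup.zmultiples (1 : ℝ) := fun p =>
    QuotientAddGroup.eq_iff_sub_mem.1 (congrArg Prod.fst (h p))
  have hconst : ∀ p, (D p).1 - p.1 = (D 0).1 - (0 : Plane).1 := fun p =>
    isPreconnected_univ.constant_of_mapsTo (T := (AddSubgroup.zmultiples (1 : ℝ) : Set ℝ))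
      (isDiscrete_iff_discreteTopology.2
        (inferInstanceAs (DiscreteTopology (AddSubgroup.zmultiples (1 : ℝ)))))
      ((continuous_fst.comp hD).sub continuous_fst).continuousOn
      (fun p _ => hmem p) (mem_univ p) (mem_univ 0)
  obtain ⟨n, hn⟩ := AddSubgroup.mem_zmultiples_iff.1 (hmem 0)
  refine ⟨n, fun p => Prod.ext ?_ (by simpa [prj, Tr] using congrArg Prod.snd (h p))⟩
  have := hconst p
  rw [← hn, zsmul_one] at this
  simp only [Tr]
  linarith

variable {f : Ann ≃ₜ Ann} {F : Plane ≃ₜ Plane}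

theorem IsLift.symm (h : IsLift f F) : IsLift f.symm F.symm := fun p => by
  rw [f.eq_symm_apply, ← h, F.apply_symm_apply]

theorem IsLift.exists_tr_comm (h : IsLift f F) (k : ℤ) :
    ∃ c : ℤ, ∀ p, F (Tr k p) = Tr c (F p) := by
  obtain ⟨c, hc⟩ := exists_eq_tr_of_prj_comp_eq (D := fun p => F (Tr k (F.symm p)))
    (F.continuous.comp ((continuous_tr k).comp F.symm.continuous))
    (fun p => by rw [h, prj_tr, h.symm, f.apply_symm_apply])
  exact ⟨c, fun p => by simpa using hc (F p)⟩

theorem IsLift.exists_units_tr_comm (h : IsLift f F) :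
    ∃ m : ℤˣ, ∀ k p, F (Tr k p) = Tr (k * m) (F p) := by
  choose c hc using h.exists_tr_comm
  choose c' hc' using h.symm.exists_tr_comm
  have hadd : ∀ k l, c (k + l) = c k + c l := fun k l => tr_left_injective (F 0) <| by
    simp only [← hc, ← tr_tr]
  have hlin : ∀ k, c k = k * c 1 := fun k => by
    simpa using map_zsmul (AddMonoidHom.mk' c hadd) k 1
  have hinv : c 1 * c' 1 = 1 := by
    have := hc (c' 1) (F.symm 0)
    rw [← hc', F.apply_symm_apply, F.apply_symm_apply, hlin] at this
    rw [mul_comm]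
    exact (tr_left_injective 0 this).symm
  exact ⟨Units.mkOfMulEqOne _ _ hinv, fun k p => by rw [Units.val_mkOfMulEqOne, ← hlin, hc]⟩

variable {q : ℕ} {fq : AddCircle (q : ℝ) × ℝ → AddCircle (q : ℝ) × ℝ}

theorem apply_add_zsmul_of_lift (hliftq : ∀ p, prjq q (F p) = fq (prjq q p)) {m : ℤˣ}
    (hm : ∀ k p, F (Tr k p) = Tr (k * m) (F p)) (x : AddCircle (q : ℝ) × ℝ) (k : ℤ) :
    fq (x + k • prjq q (1, 0)) = fq x + (k * m) • prjq q (1, 0) := by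
  obtain ⟨p, rfl⟩ := prjq_surjective q x
  rw [← prjq_tr, ← hliftq, hm, prjq_tr, hliftq]

theorem IsLift.tendsto_dist_iterate_prjq (hlift : IsLift f F)
    (hliftq : ∀ p, prjq q (F p) = fq (prjq q p)) {ψ : ℕ → ℕ} {zt : Plane}
    (h : Tendsto (fun k => (⇑f)^[ψ k] (prj zt)) atTop (𝓝 (prj zt))) :
    Tendsto (fun k => dist (fq^[ψ k] (prjq q zt))
      (prjq q zt + round ((F^[ψ k] zt).1 - zt.1) • prjq q (1, 0))) atTop (𝓝 0) := by
  refine squeeze_zero (fun _ => dist_nonneg) (fun k => ?_) (tendsto_iff_dist_tendsto_zero.1 h)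
  rw [← (show Function.Semiconj prj F f from hlift).iterate_right, dist_prj_eq, ← prjq_tr,
    ← (show Function.Semiconj (prjq q) F fq from hliftq).iterate_right]
  exact dist_prjq_le q _ _

end Covering

theorem posRec_intermediate_cover_general
    (f : Ann ≃ₜ Ann) (F : Plane ≃ₜ Plane)
    (hlift : IsLift f F)
    (q : ℕ) (hq : 1 ≤ q)
    (fq : (AddCircle (q : ℝ) × ℝ) ≃ₜ (AddCircle (q : ℝ) × ℝ))
    (hliftq : ∀ p : Plane, prjq q (F p) = fq (prjq q p))
    (z : Ann) (zt : Plane) (hzt : prj zt = z) (hrec : PosRec ⇑f z) :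
    PosRec ((⇑fq)^[q]) (prjq q zt) := by
  subst hzt
  obtain ⟨ψ, hψ, hret⟩ := hrec
  obtain ⟨m, hm⟩ := hlift.exists_units_tr_comm
  have hτ : (2 * q) • prjq q (1, 0) = 0 := by rw [mul_nsmul', nsmul_prjq_one_zero, nsmul_zero]
  obtain ⟨k, r, hret_q⟩ := exists_orbitClusterPt_of_tendsto_dist (p := 2 * q) hψ.tendsto_atTop
    (finite_range_add_zsmul (isOfFinAddOrder_iff_nsmul_eq_zero.2 ⟨q, hq, nsmul_prjq_one_zero q⟩)
      _ _) (by omega) (hlift.tendsto_dist_iterate_prjq hliftq hret)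
  exact (hret_q.self_of_add_zsmul (apply_add_zsmul_of_lift hliftq hm) fq.continuous
    (dvd_mul_right 2 q) hτ (by omega)).posRec_iterate hq (dvd_mul_left q 2)

/-- Lemma 6.2: let `f_q` be the homeomorphism of the annulus `𝔸_q = ℝ²/T^q` lifted by
`F`. If `z ∈ Rec⁺(f)` and `z̃ ∈ π⁻¹(z)`, then `π_q(z̃) ∈ Rec⁺(f_q^q)`. -/
theorem posRec_intermediate_cover
    (f : Ann ≃ₜ Ann) (F : Plane ≃ₜ Plane)
    (hiso : IsotopicToId f) (hlift : IsLift f F)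
    (q : ℕ) (hq : 1 ≤ q)
    (fq : (AddCircle (q : ℝ) × ℝ) ≃ₜ (AddCircle (q : ℝ) × ℝ))
    (hliftq : ∀ p : Plane, prjq q (F p) = fq (prjq q p))
    (z : Ann) (zt : Plane) (hzt : prj zt = z) (hrec : PosRec ⇑f z) :
    PosRec ((⇑fq)^[q]) (prjq q zt) :=
  posRec_intermediate_cover_general f F hlift q hq fq hliftq z zt hzt hrec
end
end
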